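/- arXiv:1807.08722 — 3 statements merged into one kernel-verified Lean document; each statement's English description precedes it below -/
import Mathlib

section
/- Let ξ be a realizable boundary condition on Λ_{n,l}, free on the south, east and west boundaries, and suppose a < b < c < d are such that [a,c] and [b,d] are disconnecting intervals. If both are of wired-type, then [a,b], [b,c], [c,d] and [a,d] are all disconnecting intervals of wired-type. If both are of free-type, then [a,b−1], [b,c], [c+1,d] and [a,d] are all disconnecting intervals of free-type. -/
/-- Nearest-neighbour adjacency in `ℤ²`. -/
def nbr (u v : ℤ × ℤ) : Prop := (u.1 - v.1).natAbs + (u.2 - v.2).natAbs = 1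

/-- Membership in the box `Λ_{n,l} = [0,n] × [0,l]`. -/
def inBox (n l : ℤ) (v : ℤ × ℤ) : Prop := 0 ≤ v.1 ∧ v.1 ≤ n ∧ 0 ≤ v.2 ∧ v.2 ≤ l

/-- The boundary `∂Λ_{n,l}` of the box. -/
def onBoundary (n l : ℤ) (v : ℤ × ℤ) : Prop :=
  inBox n l v ∧ (v.1 = 0 ∨ v.1 = n ∨ v.2 = 0 ∨ v.2 = l)

/-- Connectivity of `u` and `v` by an open path of the configuration `ω` using
only edges of `ℤ²` that are not edges of the box `Λ_{n,l}`. -/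
def extConnected (n l : ℤ) (ω : Sym2 (ℤ × ℤ) → Prop) (u v : ℤ × ℤ) : Prop :=
  Relation.ReflTransGen
    (fun x y => nbr x y ∧ ω s(x, y) ∧ ¬(inBox n l x ∧ inBox n l y)) u v

/-- `ξ` is realizable: it is induced by the connectivities of some edge
configuration on `E(ℤ²) \ E(Λ_{n,l})`. -/
def Realizable (n l : ℤ) (ξ : ℤ × ℤ → ℤ × ℤ → Prop) : Prop :=
  ∃ ω : Sym2 (ℤ × ℤ) → Prop, ∀ u v : ℤ × ℤ,
    onBoundary n l u → onBoundary n l v → (ξ u v ↔ extConnected n l ω u v)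

/-- `ξ` is an equivalence relation which relates distinct vertices only if both
lie on the boundary of the box (i.e. it is a partition of `∂Λ_{n,l}`). -/
def BoundaryPartition (n l : ℤ) (ξ : ℤ × ℤ → ℤ × ℤ → Prop) : Prop :=
  Equivalence ξ ∧ ∀ u v, ξ u v → u ≠ v → onBoundary n l u ∧ onBoundary n l v

/-- `ξ` is free (all singletons) on the south, east and west boundaries. -/
def FreeOnSEW (n l : ℤ) (ξ : ℤ × ℤ → ℤ × ℤ → Prop) : Prop :=
  ∀ u v : ℤ × ℤ, ξ u v → u ≠ v → ¬(u.1 = 0 ∨ u.1 = n ∨ u.2 = 0)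

/-- `[a,b]` is a disconnecting interval of free-type: no block of `ξ` contains
both a vertex of `[a,b] × {l}` and a vertex of `([0,n] \ [a,b]) × {l}`. -/
def FreeType (n l : ℤ) (ξ : ℤ × ℤ → ℤ × ℤ → Prop) (a b : ℤ) : Prop :=
  ∀ x y : ℤ, a ≤ x → x ≤ b → 0 ≤ y → y ≤ n → (y < a ∨ b < y) → ¬ ξ (x, l) (y, l)

/-- `[a,b]` is a disconnecting interval of wired-type: some block of `ξ`
contains both `(a,l)` and `(b,l)`. -/
def WiredType (l : ℤ) (ξ : ℤ × ℤ → ℤ × ℤ → Prop) (a b : ℤ) : Prop := ξ (a, l) (b, l)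

/-!
Wired case. Suppose exterior paths `P` from `(a, l)` to `(c, l)` and `Q` from `(b, l)` to `(d, l)`
were vertex-disjoint, and close `P` into a loop `γ` by walking back along the top row of the box.
The parity of the number of times `γ` crosses the vertical ray going up from a face is a mod-2
winding number: on a closed walk every vertex set is entered and left equally often mod 2, so the
parity changes between neighbouring faces exactly when `γ` uses the edge between them. Let each
vertex of `Q` stand for the face to its upper left; then `Q` never crosses `γ`, so the faces above
the top row at `b` and at `d` have equal parity. Going around below the box instead, the two columns
differ by one crossing (the top-row part of `γ` passes over `b` but not over `d`), while the row
just below the box is crossed an even number of times: at a bottom vertex of the box away from the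
corners the only edge leaving the box points down, and a closed walk uses the edges at any vertex
an even number of times in total.

Free case. The sets of columns that no block of `ξ` joins to their complement in `[0, n]` are
closed under intersection, union and relative complement.
-/

open SimpleGraph

open Classical in
noncomputable def ind (P : Prop) : ZMod 2 := if P then 1 else 0

lemma ind_pos {P : Prop} (h : P) : ind P = 1 := if_pos h

lemma ind_neg {P : Prop} (h : ¬P) : ind P = 0 := if_neg h

lemma ind_xor (P Q : Prop) : ind (Xor P Q) = ind P + ind Q := by
  by_cases hP : P <;> by_cases hQ : Q <;> simp [ind, hP, hQ, Xor, CharTwo.add_self_eq_zero]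

namespace SimpleGraph.Walk

variable {V : Type*} {G : SimpleGraph V} {u v w : V}

noncomputable def dartParity (p : G.Walk u v) (r : V → V → Prop) : ZMod 2 :=
  (p.darts.map fun d => ind (r d.fst d.snd)).sum

variable {r r₁ r₂ : V → V → Prop}

@[simp] lemma dartParity_nil : (nil : G.Walk u u).dartParity r = 0 := rfl

@[simp] lemma dartParity_cons (h : G.Adj u v) (p : G.Walk v w) :
    (cons h p).dartParity r = ind (r u v) + p.dartParity r := by
  simp [dartParity]

lemma dartParity_append (p : G.Walk u v) (q : G.Walk v w) :
    (p.append q).dartParity r = p.dartParity r + q.dartParity r := by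
  simp [dartParity]

lemma dartParity_mapLe {G' : SimpleGraph V} (h : G ≤ G') (p : G.Walk u v) :
    (p.mapLe h).dartParity r = p.dartParity r := by
  simp [dartParity, Function.comp_def]

lemma dartParity_congr (p : G.Walk u v)
    (h : ∀ d ∈ p.darts, r₁ d.fst d.snd ↔ r₂ d.fst d.snd) :
    p.dartParity r₁ = p.dartParity r₂ := by
  unfold dartParity
  congr 1
  exact List.map_congr_left fun d hd => congrArg ind (propext (h d hd))

lemma dartParity_eq_zero (p : G.Walk u v) (h : ∀ d ∈ p.darts, ¬r d.fst d.snd) :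
    p.dartParity r = 0 :=
  (p.dartParity_congr (r₂ := fun _ _ => False) fun d hd => iff_false_intro (h d hd)).trans
    (by simp [dartParity, ind_neg])

lemma dartParity_xor (p : G.Walk u v) :
    p.dartParity (fun x y => Xor (r₁ x y) (r₂ x y)) = p.dartParity r₁ + p.dartParity r₂ := by
  simp [dartParity, ind_xor, List.sum_map_add]

lemma dartParity_xor_mem (A : Set V) (p : G.Walk u v) :
    p.dartParity (fun x y => Xor (x ∈ A) (y ∈ A)) = ind (u ∈ A) + ind (v ∈ A) := by
  induction p with
  | nil => simp [CharTwo.add_self_eq_zero]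
  | cons _ _ ih =>
    rw [dartParity_cons, ih, ind_xor, add_assoc, CharTwo.add_cancel_left]

lemma eq_of_forall_dart_eq {α : Type*} (f : V → α) (p : G.Walk u v)
    (h : ∀ d ∈ p.darts, f d.fst = f d.snd) : f u = f v := by
  induction p with
  | nil => rfl
  | cons hadj _ ih =>
    simp only [darts_cons, List.mem_cons, forall_eq_or_imp] at h
    exact h.1.trans (ih h.2)

end SimpleGraph.Walk

lemma nbr_iff {u v : ℤ × ℤ} : nbr u v ↔
    v = (u.1 + 1, u.2) ∨ v = (u.1 - 1, u.2) ∨ v = (u.1, u.2 + 1) ∨ v = (u.1, u.2 - 1) := by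
  obtain ⟨u₁, u₂⟩ := u
  obtain ⟨v₁, v₂⟩ := v
  simp only [nbr, Prod.mk.injEq]
  omega

def gridGraph : SimpleGraph (ℤ × ℤ) where
  Adj := nbr
  symm := ⟨fun u v h => by unfold nbr at *; omega⟩
  loopless := ⟨fun u h => by simp [nbr] at h⟩

/-- The step `u → v` crosses the vertical half-line `{x - 1/2} × (y + 1/2, ∞)`, i.e. the ray going
up from the centre of the face `[x - 1, x] × [y, y + 1]`. -/
def CrossesAbove (x y : ℤ) (u v : ℤ × ℤ) : Prop :=
  u.2 = v.2 ∧ y < u.2 ∧ (u.1 = x - 1 ∧ v.1 = x ∨ u.1 = x ∧ v.1 = x - 1)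

/-- The step `u → v` crosses the horizontal segment `[x₀ - 1/2, x₁ - 1/2] × {y + 1/2}`. -/
def CrossesRowSegment (x₀ x₁ y : ℤ) (u v : ℤ × ℤ) : Prop :=
  u.1 = v.1 ∧ x₀ ≤ u.1 ∧ u.1 < x₁ ∧ (u.2 = y ∧ v.2 = y + 1 ∨ u.2 = y + 1 ∧ v.2 = y)

section RayParity

variable {G : SimpleGraph (ℤ × ℤ)} {p q : ℤ × ℤ}

lemma dartParity_crossesAbove_add (w : G.Walk p q) {x y₀ y₁ : ℤ} (hy : y₀ ≤ y₁) :
    w.dartParity (CrossesAbove x y₀) + w.dartParity (CrossesAbove x y₁) =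
      w.dartParity (fun u v => CrossesAbove x y₀ u v ∧ ¬CrossesAbove x y₁ u v) := by
  rw [← Walk.dartParity_xor]
  refine w.dartParity_congr fun d _ => ?_
  unfold CrossesAbove Xor
  omega

lemma xor_mem_strip_iff {u v : ℤ × ℤ} (huv : nbr u v) {x₀ x₁ y : ℤ} (hx : x₀ ≤ x₁) :
    Xor (u ∈ {z : ℤ × ℤ | x₀ ≤ z.1 ∧ z.1 < x₁ ∧ y < z.2})
        (v ∈ {z : ℤ × ℤ | x₀ ≤ z.1 ∧ z.1 < x₁ ∧ y < z.2}) ↔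
      Xor (Xor (CrossesAbove x₀ y u v) (CrossesAbove x₁ y u v))
        (CrossesRowSegment x₀ x₁ y u v) := by
  obtain ⟨u₁, u₂⟩ := u
  rcases nbr_iff.mp huv with rfl | rfl | rfl | rfl <;>
  · simp only [Set.mem_ofPred_eq, CrossesAbove, CrossesRowSegment, Xor, true_and]
    omega

lemma dartParity_crossesAbove_add_of_closed (γ : gridGraph.Walk p p) {x₀ x₁ : ℤ} (hx : x₀ ≤ x₁)
    (y : ℤ) :
    γ.dartParity (CrossesAbove x₀ y) + γ.dartParity (CrossesAbove x₁ y) =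
      γ.dartParity (CrossesRowSegment x₀ x₁ y) := by
  have h := γ.dartParity_xor_mem {z | x₀ ≤ z.1 ∧ z.1 < x₁ ∧ y < z.2}
  rw [CharTwo.add_self_eq_zero, γ.dartParity_congr (r₂ := fun u v =>
      Xor (Xor (CrossesAbove x₀ y u v) (CrossesAbove x₁ y u v)) (CrossesRowSegment x₀ x₁ y u v))
      fun d _ => xor_mem_strip_iff d.adj hx,
    Walk.dartParity_xor, Walk.dartParity_xor, CharTwo.add_eq_zero] at h
  exact h

end RayParity

def TopRowStep (l a c : ℤ) (u v : ℤ × ℤ) : Prop :=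
  ∃ x, a < x ∧ x ≤ c ∧ u = (x, l) ∧ v = (x - 1, l)

lemma exists_topRow_walk (l : ℤ) {a c : ℤ} (hac : a ≤ c) :
    ∃ ρ : gridGraph.Walk (c, l) (a, l), ∀ d ∈ ρ.darts, TopRowStep l a c d.fst d.snd := by
  induction c, hac using Int.leInduction with
  | base => exact ⟨.nil, by simp⟩
  | succ c hac ih =>
    obtain ⟨ρ, hρ⟩ := ih
    have hadj : gridGraph.Adj (c + 1, l) (c, l) := by simp [gridGraph, nbr]
    refine ⟨.cons hadj ρ, ?_⟩
    simp only [Walk.darts_cons, List.mem_cons, forall_eq_or_imp]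
    refine ⟨⟨c + 1, by omega, le_rfl, rfl, by simp⟩, fun d hd => ?_⟩
    obtain ⟨x, h₁, h₂, h₃⟩ := hρ d hd
    exact ⟨x, h₁, by omega, h₃⟩

lemma crossesRowSegment_iff_xor_mem_bottom {n l x₀ x₁ : ℤ} {u v : ℤ × ℤ} (huv : nbr u v)
    (hout : ¬(inBox n l u ∧ inBox n l v)) (hl : 0 < l) (hx₀ : 1 ≤ x₀) (hx₁ : x₁ ≤ n) :
    CrossesRowSegment x₀ x₁ (-1) u v ↔
      Xor (u ∈ {z | x₀ ≤ z.1 ∧ z.1 < x₁ ∧ z.2 = 0}) (v ∈ {z | x₀ ≤ z.1 ∧ z.1 < x₁ ∧ z.2 = 0}) := by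
  obtain ⟨u₁, u₂⟩ := u
  rcases nbr_iff.mp huv with rfl | rfl | rfl | rfl <;>
  · simp only [inBox] at hout
    simp only [CrossesRowSegment, Set.mem_ofPred_eq, Xor, true_and]
    omega

section Planarity

variable {n l a c : ℤ} {G : SimpleGraph (ℤ × ℤ)} {hG : G ≤ gridGraph}
  {P : G.Walk (a, l) (c, l)} {ρ : gridGraph.Walk (c, l) (a, l)}

lemma mem_darts_loop (hρ : ∀ d ∈ ρ.darts, TopRowStep l a c d.fst d.snd) {d : gridGraph.Dart}
    (hd : d ∈ ((P.mapLe hG).append ρ).darts) :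
    (G.Adj d.fst d.snd ∧ d.fst ∈ P.support ∧ d.snd ∈ P.support) ∨ TopRowStep l a c d.fst d.snd := by
  rw [Walk.darts_append, List.mem_append] at hd
  rcases hd with hd | hd
  · left
    rw [Walk.darts_map, List.mem_map] at hd
    obtain ⟨d', hd', rfl⟩ := hd
    exact ⟨d'.adj, P.dart_fst_mem_support_of_mem_darts hd', P.dart_snd_mem_support_of_mem_darts hd'⟩
  · exact .inr (hρ d hd)

lemma dartParity_loop_column (hbox : ∀ u v, G.Adj u v → ¬(inBox n l u ∧ inBox n l v))
    (hρ : ∀ d ∈ ρ.darts, TopRowStep l a c d.fst d.snd) (hl : 0 ≤ l) {x : ℤ} (hx₁ : 1 ≤ x)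
    (hxn : x ≤ n) :
    ((P.mapLe hG).append ρ).dartParity (CrossesAbove x (-1)) +
        ((P.mapLe hG).append ρ).dartParity (CrossesAbove x l) = ind (a < x) + ind (c < x) := by
  rw [dartParity_crossesAbove_add _ (by omega), Walk.dartParity_append,
    Walk.dartParity_mapLe, P.dartParity_eq_zero ?inside, zero_add,
    ρ.dartParity_congr (r₂ := fun u v => Xor (u ∈ {z | z.1 < x}) (v ∈ {z | z.1 < x})) ?top,
    Walk.dartParity_xor_mem, add_comm]
  · rfl
  case inside =>
    intro d _ hcross
    apply hbox _ _ d.adj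
    unfold CrossesAbove at hcross
    unfold inBox
    omega
  case top =>
    intro d hd
    obtain ⟨x', _, _, h₁, h₂⟩ := hρ d hd
    rw [h₁, h₂]
    simp only [CrossesAbove, Set.mem_ofPred_eq, Xor, true_and]
    omega

lemma dartParity_loop_row (hbox : ∀ u v, G.Adj u v → ¬(inBox n l u ∧ inBox n l v))
    (hρ : ∀ d ∈ ρ.darts, TopRowStep l a c d.fst d.snd) (hl : 0 < l) {x₀ x₁ : ℤ} (hx₀ : 1 ≤ x₀)
    (hx : x₀ ≤ x₁) (hx₁ : x₁ ≤ n) :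
    ((P.mapLe hG).append ρ).dartParity (CrossesAbove x₀ (-1)) =
      ((P.mapLe hG).append ρ).dartParity (CrossesAbove x₁ (-1)) := by
  rw [← CharTwo.add_eq_zero, dartParity_crossesAbove_add_of_closed _ hx,
    Walk.dartParity_congr (r₂ := fun u v => Xor (u ∈ {z | x₀ ≤ z.1 ∧ z.1 < x₁ ∧ z.2 = 0})
      (v ∈ {z | x₀ ≤ z.1 ∧ z.1 < x₁ ∧ z.2 = 0})) _ ?_,
    Walk.dartParity_xor_mem, CharTwo.add_self_eq_zero]
  intro d hd
  rcases mem_darts_loop hρ hd with ⟨hadj, -, -⟩ | ⟨x, -, -, h₁, h₂⟩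
  · exact crossesRowSegment_iff_xor_mem_bottom (hG hadj) (hbox _ _ hadj) hl hx₀ hx₁
  · rw [h₁, h₂]
    simp only [CrossesRowSegment, Set.mem_ofPred_eq, Xor]
    omega

/-- The edge separating the faces named by `u` and `v` passes through `u` or `v`, so it is not an
edge of `P`, and it is an edge of `ρ` only if `u` and `v` both lie in the box. -/
lemma dartParity_loop_eq_of_adj (hbox : ∀ u v, G.Adj u v → ¬(inBox n l u ∧ inBox n l v))
    (hρ : ∀ d ∈ ρ.darts, TopRowStep l a c d.fst d.snd) (ha : 0 ≤ a) (hcn : c ≤ n) (hl : 0 < l)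
    {u v : ℤ × ℤ} (huv : G.Adj u v) (hu : u ∉ P.support) (hv : v ∉ P.support) :
    ((P.mapLe hG).append ρ).dartParity (CrossesAbove u.1 u.2) =
      ((P.mapLe hG).append ρ).dartParity (CrossesAbove v.1 v.2) := by
  wlog hdir : v = (u.1, u.2 + 1) ∨ v = (u.1 + 1, u.2) generalizing u v with H
  · refine (H huv.symm hv hu ?_).symm
    rcases nbr_iff.mp (hG huv) with rfl | rfl | rfl | rfl <;> simp_all
  obtain ⟨x, y⟩ := u
  rcases hdir with rfl | rfl
  · rw [← CharTwo.add_eq_zero, dartParity_crossesAbove_add _ (by omega : y ≤ y + 1),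
      Walk.dartParity_eq_zero]
    intro d hd ⟨hcross, hnot⟩
    unfold CrossesAbove at hcross hnot
    rcases mem_darts_loop hρ hd with ⟨-, h₁, h₂⟩ | ⟨x', hax', hx'c, h₁, h₂⟩
    · have : d.fst = (x, y + 1) ∨ d.snd = (x, y + 1) := by
        simp only [Prod.ext_iff]
        omega
      rcases this with h | h
      · exact hv (h ▸ h₁)
      · exact hv (h ▸ h₂)
    · rw [h₁, h₂] at hcross hnot
      apply hbox _ _ huv
      simp only [inBox]
      omega
  · rw [← CharTwo.add_eq_zero, dartParity_crossesAbove_add_of_closed _ (by omega : x ≤ x + 1),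
      Walk.dartParity_eq_zero]
    intro d hd hcross
    unfold CrossesRowSegment at hcross
    rcases mem_darts_loop hρ hd with ⟨-, h₁, h₂⟩ | ⟨x', -, -, h₁, h₂⟩
    · have : d.fst = (x, y) ∨ d.snd = (x, y) := by
        simp only [Prod.ext_iff]
        omega
      rcases this with h | h
      · exact hu (h ▸ h₁)
      · exact hu (h ▸ h₂)
    · rw [h₁, h₂] at hcross
      omega

end Planarity

theorem exists_mem_support_of_interleaved {n l a b c d : ℤ} {G : SimpleGraph (ℤ × ℤ)}
    (hG : G ≤ gridGraph) (hbox : ∀ u v, G.Adj u v → ¬(inBox n l u ∧ inBox n l v)) (hl : 0 < l)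
    (ha : 0 ≤ a) (hab : a < b) (hbc : b < c) (hcd : c < d) (hd : d ≤ n)
    (P : G.Walk (a, l) (c, l)) (Q : G.Walk (b, l) (d, l)) : ∃ v ∈ Q.support, v ∈ P.support := by
  by_contra! hdisj
  obtain ⟨ρ, hρ⟩ := exists_topRow_walk l (hab.trans hbc).le
  have hcolb := dartParity_loop_column (hG := hG) (P := P) hbox hρ hl.le (x := b) (by omega)
    (by omega)
  have hcold := dartParity_loop_column (hG := hG) (P := P) hbox hρ hl.le (x := d) (by omega) hd
  have hrow := dartParity_loop_row (hG := hG) (P := P) hbox hρ hl (x₀ := b) (x₁ := d) (by omega)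
    (by omega) hd
  have hQ := Q.eq_of_forall_dart_eq
    (fun p => ((P.mapLe hG).append ρ).dartParity (CrossesAbove p.1 p.2)) fun e he =>
      dartParity_loop_eq_of_adj hbox hρ ha (by omega) hl e.adj
        (hdisj _ (Q.dart_fst_mem_support_of_mem_darts he))
        (hdisj _ (Q.dart_snd_mem_support_of_mem_darts he))
  simp only at hQ
  rw [hrow, hQ, hcold, ind_pos hab, ind_neg (show ¬c < b by omega), ind_pos (show a < d by omega),
    ind_pos hcd] at hcolb
  exact absurd hcolb (by decide)

theorem reachable_of_interleaved {n l a b c d : ℤ} {G : SimpleGraph (ℤ × ℤ)}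
    (hG : G ≤ gridGraph) (hbox : ∀ u v, G.Adj u v → ¬(inBox n l u ∧ inBox n l v)) (hl : 0 < l)
    (ha : 0 ≤ a) (hab : a < b) (hbc : b < c) (hcd : c < d) (hd : d ≤ n)
    (hac : G.Reachable (a, l) (c, l)) (hbd : G.Reachable (b, l) (d, l)) :
    G.Reachable (a, l) (b, l) := by
  obtain ⟨P⟩ := hac
  obtain ⟨Q⟩ := hbd
  obtain ⟨v, hvQ, hvP⟩ := exists_mem_support_of_interleaved hG hbox hl ha hab hbc hcd hd P Q
  exact (P.takeUntil v hvP).reachable.trans (Q.takeUntil v hvQ).reachable.symm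

def exteriorGraph (n l : ℤ) (ω : Sym2 (ℤ × ℤ) → Prop) : SimpleGraph (ℤ × ℤ) where
  Adj u v := nbr u v ∧ ω s(u, v) ∧ ¬(inBox n l u ∧ inBox n l v)
  symm := ⟨fun _ _ ⟨h, hω, hout⟩ =>
    ⟨gridGraph.symm.symm _ _ h, Sym2.eq_swap ▸ hω, and_comm.not.mp hout⟩⟩
  loopless := ⟨fun u h => gridGraph.loopless.irrefl u h.1⟩

lemma extConnected_iff_reachable {n l : ℤ} {ω : Sym2 (ℤ × ℤ) → Prop} {u v : ℤ × ℤ} :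
    extConnected n l ω u v ↔ (exteriorGraph n l ω).Reachable u v := by
  rw [reachable_iff_reflTransGen]
  rfl

lemma WiredType.of_interleaved {n l a b c d : ℤ} {ξ : ℤ × ℤ → ℤ × ℤ → Prop}
    (hreal : Realizable n l ξ) (hl : 0 < l) (ha : 0 ≤ a) (hab : a < b) (hbc : b < c)
    (hcd : c < d) (hd : d ≤ n) (hac : WiredType l ξ a c) (hbd : WiredType l ξ b d) :
    WiredType l ξ a b := by
  obtain ⟨ω, hω⟩ := hreal
  have htop : ∀ x, 0 ≤ x → x ≤ n → onBoundary n l (x, l) := fun x h₀ hn =>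
    ⟨⟨h₀, hn, hl.le, le_rfl⟩, .inr (.inr (.inr rfl))⟩
  have hξ : ∀ x y, 0 ≤ x → x ≤ n → 0 ≤ y → y ≤ n →
      (ξ (x, l) (y, l) ↔ (exteriorGraph n l ω).Reachable (x, l) (y, l)) :=
    fun x y hx₀ hxn hy₀ hyn =>
      (hω _ _ (htop x hx₀ hxn) (htop y hy₀ hyn)).trans extConnected_iff_reachable
  rw [WiredType, hξ a c ha (by omega) (by omega) (by omega)] at hac
  rw [WiredType, hξ b d (by omega) (by omega) (by omega) hd] at hbd
  rw [WiredType, hξ a b ha (by omega) (by omega) (by omega)]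
  exact reachable_of_interleaved (fun _ _ h => h.1) (fun _ _ h => h.2.2) hl ha hab hbc hcd hd
    hac hbd

def Disconnecting (n l : ℤ) (ξ : ℤ × ℤ → ℤ × ℤ → Prop) (S : Set ℤ) : Prop :=
  ∀ x ∈ S, ∀ y ∈ Set.Icc 0 n, y ∉ S → ¬ξ (x, l) (y, l)

lemma freeType_iff_disconnecting {n l a b : ℤ} {ξ : ℤ × ℤ → ℤ × ℤ → Prop} :
    FreeType n l ξ a b ↔ Disconnecting n l ξ (Set.Icc a b) := by
  simp only [FreeType, Disconnecting, Set.mem_Icc, not_and_or, not_le, and_imp]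
  exact ⟨fun h x hxa hxb y => h x y hxa hxb, fun h x y hxa hxb => h x hxa hxb y⟩

namespace Disconnecting

variable {n l : ℤ} {ξ : ℤ × ℤ → ℤ × ℤ → Prop} {S T : Set ℤ}

lemma inter (hS : Disconnecting n l ξ S) (hT : Disconnecting n l ξ T) :
    Disconnecting n l ξ (S ∩ T) := fun x hx y hy hyST =>
  (not_and_or.mp hyST).elim (hS x hx.1 y hy) (hT x hx.2 y hy)

lemma union (hS : Disconnecting n l ξ S) (hT : Disconnecting n l ξ T) :
    Disconnecting n l ξ (S ∪ T) := fun x hx y hy hyST =>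
  hx.elim (fun hxS => hS x hxS y hy fun h => hyST (.inl h))
    (fun hxT => hT x hxT y hy fun h => hyST (.inr h))

lemma diff (hξ : Std.Symm ξ) (hS₀ : S ⊆ Set.Icc 0 n) (hS : Disconnecting n l ξ S)
    (hT : Disconnecting n l ξ T) : Disconnecting n l ξ (S \ T) := by
  intro x hx y hy hyST hxy
  by_cases hyS : y ∈ S
  · exact hT y (by_contra fun hyT => hyST ⟨hyS, hyT⟩) x (hS₀ hx.1) hx.2 (hξ.symm _ _ hxy)
  · exact hS x hx.1 y hy hyS hxy

end Disconnecting

lemma FreeType.of_interleaved {n l a b c d : ℤ} {ξ : ℤ × ℤ → ℤ × ℤ → Prop} (hξ : Std.Symm ξ)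
    (ha : 0 ≤ a) (hab : a < b) (hbc : b < c) (hcd : c < d) (hd : d ≤ n)
    (hac : FreeType n l ξ a c) (hbd : FreeType n l ξ b d) :
    FreeType n l ξ a (b - 1) ∧ FreeType n l ξ b c ∧ FreeType n l ξ (c + 1) d ∧
      FreeType n l ξ a d := by
  simp only [freeType_iff_disconnecting] at *
  have hI₁ : Set.Icc a (b - 1) = Set.Icc a c \ Set.Icc b d := by ext; simp; omega
  have hI₂ : Set.Icc b c = Set.Icc a c ∩ Set.Icc b d := by ext; simp; omega
  have hI₃ : Set.Icc (c + 1) d = Set.Icc b d \ Set.Icc a c := by ext; simp; omega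
  have hI₄ : Set.Icc a d = Set.Icc a c ∪ Set.Icc b d := by ext; simp; omega
  rw [hI₁, hI₂, hI₃, hI₄]
  exact ⟨hac.diff hξ (Set.Icc_subset_Icc ha (by omega)) hbd, hac.inter hbd,
    hbd.diff hξ (Set.Icc_subset_Icc (by omega) hd) hac, hac.union hbd⟩

theorem statement4_general (n l : ℤ) (hl : 0 < l)
    (ξ : ℤ × ℤ → ℤ × ℤ → Prop)
    (hpart : BoundaryPartition n l ξ) (hreal : Realizable n l ξ)
    (a b c d : ℤ) (ha : 0 ≤ a) (hab : a < b) (hbc : b < c) (hcd : c < d) (hd : d ≤ n) :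
    ((WiredType l ξ a c ∧ WiredType l ξ b d) →
        WiredType l ξ a b ∧ WiredType l ξ b c ∧ WiredType l ξ c d ∧ WiredType l ξ a d) ∧
      ((FreeType n l ξ a c ∧ FreeType n l ξ b d) →
        FreeType n l ξ a (b - 1) ∧ FreeType n l ξ b c ∧ FreeType n l ξ (c + 1) d ∧
          FreeType n l ξ a d) := by
  obtain ⟨hequiv, -⟩ := hpart
  refine ⟨fun ⟨hac, hbd⟩ => ?_, fun ⟨hac, hbd⟩ =>
    FreeType.of_interleaved ⟨fun _ _ => hequiv.symm⟩ ha hab hbc hcd hd hac hbd⟩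
  have hab' : WiredType l ξ a b := WiredType.of_interleaved hreal hl ha hab hbc hcd hd hac hbd
  have hbc' : WiredType l ξ b c := hequiv.trans (hequiv.symm hab') hac
  exact ⟨hab', hbc', hequiv.trans (hequiv.symm hbc') hbd, hequiv.trans hab' hbd⟩

/-- Intersections of overlapping disconnecting intervals:
if `a < b < c < d` and `[a,c]`, `[b,d]` are disconnecting intervals, then in the
wired case `[a,b]`, `[b,c]`, `[c,d]`, `[a,d]` are all wired-type disconnecting
intervals, and in the free case `[a,b-1]`, `[b,c]`, `[c+1,d]`, `[a,d]` are all
free-type disconnecting intervals. -/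
theorem statement4 (n l : ℤ) (hn : 0 < n) (hl : 0 < l)
    (ξ : ℤ × ℤ → ℤ × ℤ → Prop)
    (hpart : BoundaryPartition n l ξ) (hreal : Realizable n l ξ)
    (hfree : FreeOnSEW n l ξ)
    (a b c d : ℤ) (ha : 0 ≤ a) (hab : a < b) (hbc : b < c) (hcd : c < d) (hd : d ≤ n) :
    ((WiredType l ξ a c ∧ WiredType l ξ b d) →
        WiredType l ξ a b ∧ WiredType l ξ b c ∧ WiredType l ξ c d ∧ WiredType l ξ a d) ∧
      ((FreeType n l ξ a c ∧ FreeType n l ξ b d) →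
        FreeType n l ξ a (b - 1) ∧ FreeType n l ξ b c ∧ FreeType n l ξ (c + 1) d ∧
          FreeType n l ξ a d) :=
  statement4_general n l hl ξ hpart hreal a b c d ha hab hbc hcd hd
end

section
/- Let P be the transition matrix of an irreducible Markov chain on a finite state space Ω, reversible with respect to a probability distribution μ. For any nonempty A ⊂ Ω with μ(A) ≤ 1/2, define the conductance Φ(A) = Q(A,A^c)/μ(A) where Q(A,A^c) = Σ_{ω∈A, ω'∈A^c} μ(ω)P(ω,ω'), and let Φ_* be the minimum of Φ(A) over such A. Then the spectral gap of P satisfies Φ_*²/2 ≤ gap(P) ≤ 2Φ_*. -/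
open Finset

/-- Dirichlet form `E(f,f) = (1/2) Σ_{x,y} μ(x) P(x,y) (f(x)-f(y))²` of a
reversible chain. -/
noncomputable def dirichletForm {Ω : Type*} [Fintype Ω]
    (μ : Ω → ℝ) (P : Matrix Ω Ω ℝ) (f : Ω → ℝ) : ℝ :=
  (1 / 2) * ∑ x, ∑ y, μ x * P x y * (f x - f y) ^ 2

/-- Variance of `f` under `μ`. -/
noncomputable def varForm {Ω : Type*} [Fintype Ω] (μ : Ω → ℝ) (f : Ω → ℝ) : ℝ :=
  ∑ x, μ x * (f x - ∑ y, μ y * f y) ^ 2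

/-- The spectral gap `1 - λ₂` of a reversible chain, via its variational
characterization as the infimum of `E(f,f)/Var(f)` over non-constant `f`. -/
noncomputable def specGap {Ω : Type*} [Fintype Ω] (μ : Ω → ℝ) (P : Matrix Ω Ω ℝ) : ℝ :=
  sInf {r : ℝ | ∃ f : Ω → ℝ, varForm μ f ≠ 0 ∧ r = dirichletForm μ P f / varForm μ f}

/-- The edge measure `Q(A,Aᶜ)`. -/
noncomputable def edgeFlow {Ω : Type*} [Fintype Ω] [DecidableEq Ω]
    (μ : Ω → ℝ) (P : Matrix Ω Ω ℝ) (A : Finset Ω) : ℝ :=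
  ∑ x ∈ A, ∑ y ∈ Aᶜ, μ x * P x y

/-- The conductance `Φ(A) = Q(A,Aᶜ)/μ(A)` of a set `A`. -/
noncomputable def conductance {Ω : Type*} [Fintype Ω] [DecidableEq Ω]
    (μ : Ω → ℝ) (P : Matrix Ω Ω ℝ) (A : Finset Ω) : ℝ :=
  edgeFlow μ P A / ∑ x ∈ A, μ x

/-- `Φ_* = min {Φ(A) : A ≠ ∅, μ(A) ≤ 1/2}`. -/
noncomputable def minConductance {Ω : Type*} [Fintype Ω] [DecidableEq Ω]
    (μ : Ω → ℝ) (P : Matrix Ω Ω ℝ) : ℝ :=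
  sInf {r : ℝ | ∃ A : Finset Ω, A.Nonempty ∧ (∑ x ∈ A, μ x) ≤ 1 / 2 ∧
    r = conductance μ P A}

/-!
Upper bound: the indicator of an admissible set `A` has Dirichlet form `Q(A, Aᶜ)` and variance
`μ(A) (1 - μ(A)) ≥ μ(A) / 2`, so it has Rayleigh quotient at most `2 Φ(A)`.

Lower bound: split `f - m` at a median `m` of `f` into its positive and negative parts; each is
supported on a set of measure at most `1/2`, the variance of `f` is at most the sum of their
squared norms, and the Dirichlet form of `f` dominates the sum of theirs. For `g` supported on such
a set, the discrete co-area inequality `Φ ∑ μ g² ≤ ∑ Q(x,y) (g(x)² - g(y)²)⁺` (peel off the level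
sets of `g²` one at a time) combined with Cauchy–Schwarz gives `Φ² / 2 · ∑ μ g² ≤ E(g)`.
-/

section

variable {Ω : Type*} [Fintype Ω] {μ : Ω → ℝ} {P : Matrix Ω Ω ℝ}

noncomputable def positiveFlow (μ : Ω → ℝ) (P : Matrix Ω Ω ℝ) (F : Ω → ℝ) : ℝ :=
  ∑ x, ∑ y, μ x * P x y * (F x - F y)⁺

theorem posPart_add_of_mul_nonneg {u v : ℝ} (h : 0 ≤ u * v) : (u + v)⁺ = u⁺ + v⁺ := by
  rcases le_total 0 u with hu | hu <;> rcases le_total 0 v with hv | hv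
  · simp [hu, hv, add_nonneg hu hv]
  · obtain rfl | rfl := mul_eq_zero.1 (le_antisymm (mul_nonpos_of_nonneg_of_nonpos hu hv) h) <;>
      simp
  · obtain rfl | rfl := mul_eq_zero.1 (le_antisymm (mul_nonpos_of_nonpos_of_nonneg hu hv) h) <;>
      simp
  · simp [hu, hv, add_nonpos hu hv]

theorem positiveFlow_add {F G : Ω → ℝ} (h : ∀ x y, 0 ≤ (F x - F y) * (G x - G y)) :
    positiveFlow μ P (F + G) = positiveFlow μ P F + positiveFlow μ P G := by
  simp only [positiveFlow, ← sum_add_distrib, Pi.add_apply, add_sub_add_comm,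
    posPart_add_of_mul_nonneg (h _ _), mul_add]

theorem sum_sum_ite_mem_and_notMem [DecidableEq Ω] (A : Finset Ω) (h : Ω → Ω → ℝ) :
    ∑ x, ∑ y, (if x ∈ A ∧ y ∉ A then h x y else 0) = ∑ x ∈ A, ∑ y ∈ Aᶜ, h x y := by
  simp only [← mem_compl (s := A), ite_and, sum_ite_irrel, sum_const_zero, sum_ite_mem, univ_inter]

theorem positiveFlow_indicator [DecidableEq Ω] (A : Finset Ω) {c : ℝ} (hc : 0 ≤ c) :
    positiveFlow μ P (fun x => if x ∈ A then c else 0) = c * edgeFlow μ P A := by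
  have key : ∀ x y, μ x * P x y * ((if x ∈ A then c else 0) - if y ∈ A then c else 0)⁺
      = if x ∈ A ∧ y ∉ A then c * (μ x * P x y) else 0 := by
    intro x y
    by_cases hx : x ∈ A <;> by_cases hy : y ∈ A <;> simp [hx, hy, hc, mul_comm]
  simp only [positiveFlow, key, sum_sum_ite_mem_and_notMem, edgeFlow, mul_sum]

theorem mul_sum_le_positiveFlow [DecidableEq Ω] {Φ : ℝ} (S : Finset Ω)
    (hΦ : ∀ A ⊆ S, Φ * ∑ x ∈ A, μ x ≤ edgeFlow μ P A) {F : Ω → ℝ} (hF : 0 ≤ F)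
    (hFS : ∀ x ∉ S, F x = 0) : Φ * ∑ x, μ x * F x ≤ positiveFlow μ P F := by
  induction S using Finset.strongInduction generalizing F with
  | H S ih =>
  rcases S.eq_empty_or_nonempty with rfl | hS
  · obtain rfl : F = 0 := funext fun x => hFS x (notMem_empty x)
    simp [positiveFlow]
  obtain ⟨x₀, hx₀, hmin⟩ := S.exists_min_image F hS
  -- Peel off the lowest level: `F = (F - G) + G` with `G = (min_S F) • 1_S`, two comonotone
  -- summands, so `positiveFlow` is additive on them.
  set G : Ω → ℝ := fun x => if x ∈ S then F x₀ else 0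
  have hFG_nonneg : 0 ≤ F - G := by
    intro x
    by_cases hx : x ∈ S
    · simp [G, hx, hmin x hx]
    · simp [G, hx, hFS x hx]
  have hFG_supp : ∀ x ∉ S.erase x₀, (F - G) x = 0 := by
    intro x hx
    by_cases hxS : x ∈ S
    · obtain rfl : x = x₀ := by simpa [hxS] using hx
      simp [G, hxS]
    · simp [G, hxS, hFS x hxS]
  have hcomon : ∀ x y, 0 ≤ ((F - G) x - (F - G) y) * (G x - G y) := by
    intro x y
    have hc := hF x₀
    by_cases hx : x ∈ S <;> by_cases hy : y ∈ S
    · simp [G, hx, hy]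
    · simpa [G, hx, hy, hFS y hy] using mul_nonneg (sub_nonneg.2 (hmin x hx)) hc
    · simpa [G, hx, hy, hFS x hx] using
        mul_nonpos_of_nonpos_of_nonneg (sub_nonpos.2 (hmin y hy)) hc
    · simp [G, hx, hy]
  have hsum : ∑ x, μ x * F x = ∑ x, μ x * (F - G) x + F x₀ * ∑ x ∈ S, μ x := by
    simp [G, mul_sub, sum_sub_distrib, mul_ite, mul_sum, mul_comm]
  calc Φ * ∑ x, μ x * F x
      = Φ * ∑ x, μ x * (F - G) x + F x₀ * (Φ * ∑ x ∈ S, μ x) := by rw [hsum]; ring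
    _ ≤ positiveFlow μ P (F - G) + F x₀ * edgeFlow μ P S :=
      add_le_add (ih _ (erase_ssubset hx₀) (fun A hA => hΦ A (hA.trans (erase_subset _ _)))
        hFG_nonneg hFG_supp) (mul_le_mul_of_nonneg_left (hΦ S subset_rfl) (hF x₀))
    _ = positiveFlow μ P F := by
      rw [← positiveFlow_indicator S (hF x₀), ← positiveFlow_add hcomon, sub_add_cancel]

theorem dirichletForm_nonneg (hμ : ∀ x, 0 ≤ μ x) (hP : ∀ x y, 0 ≤ P x y) (f : Ω → ℝ) :
    0 ≤ dirichletForm μ P f := by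
  unfold dirichletForm
  exact mul_nonneg (by norm_num) (sum_nonneg fun x _ => sum_nonneg fun y _ =>
    mul_nonneg (mul_nonneg (hμ x) (hP x y)) (sq_nonneg _))

theorem varForm_nonneg (hμ : ∀ x, 0 ≤ μ x) (f : Ω → ℝ) : 0 ≤ varForm μ f :=
  sum_nonneg fun x _ => mul_nonneg (hμ x) (sq_nonneg _)

theorem sum_sum_mul_left (hP1 : ∀ x, ∑ y, P x y = 1) (φ : Ω → ℝ) :
    ∑ x, ∑ y, μ x * P x y * φ x = ∑ x, μ x * φ x := by
  simp [mul_right_comm _ _ (φ _), ← mul_sum, hP1]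

theorem sum_sum_mul_right (hP1 : ∀ x, ∑ y, P x y = 1)
    (hrev : ∀ x y, μ x * P x y = μ y * P y x) (φ : Ω → ℝ) :
    ∑ x, ∑ y, μ x * P x y * φ y = ∑ x, μ x * φ x := by
  rw [sum_comm, ← sum_sum_mul_left hP1]
  exact sum_congr rfl fun y _ => sum_congr rfl fun x _ => by rw [hrev]

theorem two_mul_positiveFlow (hrev : ∀ x y, μ x * P x y = μ y * P y x) (F : Ω → ℝ) :
    2 * positiveFlow μ P F = ∑ x, ∑ y, μ x * P x y * |F x - F y| := by
  have hswap : positiveFlow μ P F = ∑ x, ∑ y, μ x * P x y * (F x - F y)⁻ := by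
    rw [positiveFlow, sum_comm]
    refine sum_congr rfl fun y _ => sum_congr rfl fun x _ => ?_
    rw [hrev, ← posPart_neg, neg_sub]
  rw [two_mul]
  nth_rw 2 [hswap]
  simp only [positiveFlow, ← sum_add_distrib, ← mul_add, posPart_add_negPart]

theorem sq_sum_abs_sub_sq_le (hμ : ∀ x, 0 ≤ μ x) (hP : ∀ x y, 0 ≤ P x y)
    (hP1 : ∀ x, ∑ y, P x y = 1) (hrev : ∀ x y, μ x * P x y = μ y * P y x) (g : Ω → ℝ) :
    (∑ x, ∑ y, μ x * P x y * |g x ^ 2 - g y ^ 2|) ^ 2 ≤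
      8 * dirichletForm μ P g * ∑ x, μ x * g x ^ 2 := by
  have hQ : ∀ x y, 0 ≤ μ x * P x y := fun x y => mul_nonneg (hμ x) (hP x y)
  -- Cauchy–Schwarz against the weights `Q(x,y)`, using `|a² - b²| = |a - b| |a + b|` and
  -- `(a + b)² ≤ 2a² + 2b²`.
  have hCS := sum_sq_le_sum_mul_sum_of_sq_le_mul (univ : Finset (Ω × Ω))
    (r := fun p => μ p.1 * P p.1 p.2 * |g p.1 ^ 2 - g p.2 ^ 2|)
    (f := fun p => μ p.1 * P p.1 p.2 * (g p.1 - g p.2) ^ 2)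
    (g := fun p => μ p.1 * P p.1 p.2 * (2 * g p.1 ^ 2 + 2 * g p.2 ^ 2))
    (fun p _ => mul_nonneg (hQ _ _) (sq_nonneg _))
    (fun p _ => mul_nonneg (hQ _ _) (by positivity))
    (fun p _ => by
      have := hQ p.1 p.2
      calc (μ p.1 * P p.1 p.2 * |g p.1 ^ 2 - g p.2 ^ 2|) ^ 2
          = (μ p.1 * P p.1 p.2) ^ 2 * ((g p.1 - g p.2) ^ 2 * (g p.1 + g p.2) ^ 2) := by
            rw [mul_pow, sq_abs]; ring
        _ ≤ (μ p.1 * P p.1 p.2) ^ 2 *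
            ((g p.1 - g p.2) ^ 2 * (2 * g p.1 ^ 2 + 2 * g p.2 ^ 2)) := by
            gcongr; nlinarith [sq_nonneg (g p.1 - g p.2)]
        _ = _ := by ring)
  simp only [Fintype.sum_prod_type] at hCS
  have hsq :
      ∑ x, ∑ y, μ x * P x y * (2 * g x ^ 2 + 2 * g y ^ 2) = 4 * ∑ x, μ x * g x ^ 2 := by
    simp only [mul_add, sum_add_distrib, mul_left_comm _ (2 : ℝ), ← mul_sum,
      sum_sum_mul_left hP1 (fun x => g x ^ 2), sum_sum_mul_right hP1 hrev (fun x => g x ^ 2)]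
    ring
  have hE : ∑ x, ∑ y, μ x * P x y * (g x - g y) ^ 2 = 2 * dirichletForm μ P g := by
    rw [dirichletForm]; ring
  rw [hsq, hE] at hCS
  linarith

theorem sq_mul_sum_sq_le_dirichletForm [DecidableEq Ω] (hμ : ∀ x, 0 ≤ μ x)
    (hP : ∀ x y, 0 ≤ P x y) (hP1 : ∀ x, ∑ y, P x y = 1)
    (hrev : ∀ x y, μ x * P x y = μ y * P y x) {Φ : ℝ} (hΦ0 : 0 ≤ Φ) (S : Finset Ω)
    (hΦ : ∀ A ⊆ S, Φ * ∑ x ∈ A, μ x ≤ edgeFlow μ P A) {g : Ω → ℝ} (hgS : ∀ x ∉ S, g x = 0) :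
    Φ ^ 2 / 2 * ∑ x, μ x * g x ^ 2 ≤ dirichletForm μ P g := by
  set N := ∑ x, μ x * g x ^ 2
  have hN : 0 ≤ N := sum_nonneg fun x _ => mul_nonneg (hμ x) (sq_nonneg _)
  have hE := dirichletForm_nonneg hμ hP g
  have hcoarea : Φ * N ≤ positiveFlow μ P (g ^ 2) :=
    mul_sum_le_positiveFlow S hΦ (fun x => sq_nonneg (g x)) (fun x hx => by simp [hgS x hx])
  have hCS := sq_sum_abs_sub_sq_le hμ hP hP1 hrev g
  have htwo := two_mul_positiveFlow hrev (g ^ 2)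
  simp only [Pi.pow_apply] at htwo
  rw [← htwo] at hCS
  have hsq : (Φ * N) ^ 2 ≤ 2 * dirichletForm μ P g * N := by
    nlinarith [pow_le_pow_left₀ (mul_nonneg hΦ0 hN) hcoarea 2]
  rcases hN.eq_or_lt with hN0 | hNpos
  · rw [← hN0, mul_zero]
    exact hE
  · exact le_of_mul_le_mul_right (by nlinarith) hNpos

theorem sq_posPart_sub_add_sq_negPart_sub_le (u v : ℝ) :
    (u⁺ - v⁺) ^ 2 + (u⁻ - v⁻) ^ 2 ≤ (u - v) ^ 2 := by
  rcases le_total 0 u with hu | hu <;> rcases le_total 0 v with hv | hv <;>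
    simp only [posPart_of_nonneg, posPart_of_nonpos, negPart_of_nonneg, negPart_of_nonpos,
      hu, hv] <;> nlinarith

theorem posPart_sq_add_negPart_sq (u : ℝ) : u⁺ ^ 2 + u⁻ ^ 2 = u ^ 2 := by
  rcases le_total 0 u with hu | hu <;>
    simp [posPart_of_nonneg, posPart_of_nonpos, negPart_of_nonneg, negPart_of_nonpos, hu]

theorem dirichletForm_posPart_add_negPart_le (hμ : ∀ x, 0 ≤ μ x) (hP : ∀ x y, 0 ≤ P x y)
    (f : Ω → ℝ) (c : ℝ) :
    dirichletForm μ P (fun x => (f x - c)⁺) + dirichletForm μ P (fun x => (f x - c)⁻) ≤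
      dirichletForm μ P f := by
  simp only [dirichletForm, ← mul_add, ← sum_add_distrib]
  gcongr with x _ y _
  · exact mul_nonneg (hμ x) (hP x y)
  · simpa only [sub_sub_sub_cancel_right] using
      sq_posPart_sub_add_sq_negPart_sub_le (f x - c) (f y - c)

theorem sum_sq_sub_eq_varForm_add (hμ1 : ∑ x, μ x = 1) (f : Ω → ℝ) (c : ℝ) :
    ∑ x, μ x * (f x - c) ^ 2 = varForm μ f + (∑ x, μ x * f x - c) ^ 2 := by
  have expand : ∀ c, ∑ x, μ x * (f x - c) ^ 2 =
      ∑ x, μ x * f x ^ 2 - 2 * c * ∑ x, μ x * f x + c ^ 2 := by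
    intro c
    have e : ∀ x, μ x * (f x - c) ^ 2 = μ x * f x ^ 2 - 2 * c * (μ x * f x) + c ^ 2 * μ x :=
      fun x => by ring
    simp only [e, sum_add_distrib, sum_sub_distrib, ← mul_sum, hμ1, mul_one]
  rw [varForm, expand, expand]
  ring

theorem exists_median [Nonempty Ω] (hμ1 : ∑ x, μ x = 1) (f : Ω → ℝ) :
    ∃ m, ∑ x with m < f x, μ x ≤ 1 / 2 ∧ ∑ x with f x < m, μ x ≤ 1 / 2 := by
  obtain ⟨x₁, -, hx₁⟩ := univ.exists_min_image f univ_nonempty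
  have hne : ({x | ∑ y with f y < f x, μ y ≤ 1 / 2} : Finset Ω).Nonempty := by
    refine ⟨x₁, mem_filter.2 ⟨mem_univ _, ?_⟩⟩
    rw [filter_false_of_mem fun y _ => not_lt.2 (hx₁ y (mem_univ y)), sum_empty]
    norm_num
  -- `m` is the largest value of `f` below which there is mass at most `1/2`; the next value up
  -- already has more than `1/2` below it.
  obtain ⟨x₀, hx₀, hmax⟩ := exists_max_image _ f hne
  refine ⟨f x₀, ?_, (mem_filter.1 hx₀).2⟩
  by_contra! hgt
  obtain ⟨y, hy, hymin⟩ := exists_min_image _ f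
    (nonempty_of_sum_ne_zero (ne_of_gt (lt_trans (by norm_num) hgt)))
  have hlt : f x₀ < f y := (mem_filter.1 hy).2
  have hbelow : univ.filter (fun z => f z < f y) = univ.filter (fun z => ¬ f x₀ < f z) := by
    refine filter_congr fun z _ => ⟨fun hz hz' => ?_, fun hz => (not_lt.1 hz).trans_lt hlt⟩
    exact absurd (hymin z (mem_filter.2 ⟨mem_univ z, hz'⟩)) (not_le.2 hz)
  have hsplit := sum_filter_add_sum_filter_not univ (fun z => f x₀ < f z) μ
  rw [hμ1, ← hbelow] at hsplit
  have hy₀ := hmax y (mem_filter.2 ⟨mem_univ y, by linarith⟩)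
  linarith

theorem sq_mul_varForm_le_dirichletForm [DecidableEq Ω] [Nonempty Ω] (hμ : ∀ x, 0 ≤ μ x)
    (hP : ∀ x y, 0 ≤ P x y) (hP1 : ∀ x, ∑ y, P x y = 1) (hμ1 : ∑ x, μ x = 1)
    (hrev : ∀ x y, μ x * P x y = μ y * P y x) {Φ : ℝ} (hΦ0 : 0 ≤ Φ)
    (hΦ : ∀ A : Finset Ω, A.Nonempty → ∑ x ∈ A, μ x ≤ 1 / 2 →
      Φ * ∑ x ∈ A, μ x ≤ edgeFlow μ P A) (f : Ω → ℝ) :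
    Φ ^ 2 / 2 * varForm μ f ≤ dirichletForm μ P f := by
  obtain ⟨m, hup, hlow⟩ := exists_median hμ1 f
  have hsmall : ∀ S : Finset Ω, ∑ x ∈ S, μ x ≤ 1 / 2 →
      ∀ A ⊆ S, Φ * ∑ x ∈ A, μ x ≤ edgeFlow μ P A := by
    intro S hS A hA
    rcases A.eq_empty_or_nonempty with rfl | hA'
    · simp [edgeFlow]
    · exact hΦ A hA' ((sum_le_sum_of_subset_of_nonneg hA fun x _ _ => hμ x).trans hS)
  have hpos := sq_mul_sum_sq_le_dirichletForm hμ hP hP1 hrev hΦ0 _ (hsmall _ hup)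
    (g := fun x => (f x - m)⁺) (fun x hx => posPart_of_nonpos (by simpa using hx))
  have hneg := sq_mul_sum_sq_le_dirichletForm hμ hP hP1 hrev hΦ0 _ (hsmall _ hlow)
    (g := fun x => (f x - m)⁻) (fun x hx => negPart_of_nonneg (by simpa using hx))
  have hvar : varForm μ f ≤ ∑ x, μ x * (f x - m) ^ 2 := by
    rw [sum_sq_sub_eq_varForm_add hμ1]
    exact le_add_of_nonneg_right (sq_nonneg _)
  have hsplit : ∑ x, μ x * (f x - m) ^ 2 =
      ∑ x, μ x * (f x - m)⁺ ^ 2 + ∑ x, μ x * (f x - m)⁻ ^ 2 := by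
    simp only [← sum_add_distrib, ← mul_add, posPart_sq_add_negPart_sq]
  calc Φ ^ 2 / 2 * varForm μ f ≤ Φ ^ 2 / 2 * ∑ x, μ x * (f x - m) ^ 2 := by gcongr
    _ = Φ ^ 2 / 2 * ∑ x, μ x * (f x - m)⁺ ^ 2 + Φ ^ 2 / 2 * ∑ x, μ x * (f x - m)⁻ ^ 2 := by
      rw [hsplit, mul_add]
    _ ≤ dirichletForm μ P (fun x => (f x - m)⁺) + dirichletForm μ P (fun x => (f x - m)⁻) :=
      add_le_add hpos hneg
    _ ≤ dirichletForm μ P f := dirichletForm_posPart_add_negPart_le hμ hP f m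

theorem varForm_indicator [DecidableEq Ω] (hμ1 : ∑ x, μ x = 1) (A : Finset Ω) :
    varForm μ (fun x => if x ∈ A then 1 else 0) = (∑ x ∈ A, μ x) * (1 - ∑ x ∈ A, μ x) := by
  have h := sum_sq_sub_eq_varForm_add hμ1 (fun x => if x ∈ A then 1 else 0) 0
  simp only [sub_zero, ite_pow, one_pow, zero_pow two_ne_zero, mul_ite, mul_one, mul_zero,
    sum_ite_mem, univ_inter] at h
  linarith

theorem dirichletForm_indicator [DecidableEq Ω] (hrev : ∀ x y, μ x * P x y = μ y * P y x)
    (A : Finset Ω) :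
    dirichletForm μ P (fun x => if x ∈ A then 1 else 0) = edgeFlow μ P A := by
  have hsq : ∀ x y, ((if x ∈ A then 1 else 0) - if y ∈ A then 1 else 0 : ℝ) ^ 2 =
      |(if x ∈ A then 1 else 0) - if y ∈ A then 1 else 0| := by
    intro x y
    by_cases hx : x ∈ A <;> by_cases hy : y ∈ A <;> simp [hx, hy]
  rw [dirichletForm]
  simp only [hsq]
  rw [← two_mul_positiveFlow hrev, positiveFlow_indicator A zero_le_one]
  ring

theorem edgeFlow_nonneg [DecidableEq Ω] (hμ : ∀ x, 0 ≤ μ x) (hP : ∀ x y, 0 ≤ P x y)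
    (A : Finset Ω) : 0 ≤ edgeFlow μ P A :=
  sum_nonneg fun x _ => sum_nonneg fun y _ => mul_nonneg (hμ x) (hP x y)

theorem conductance_nonneg [DecidableEq Ω] (hμ : ∀ x, 0 ≤ μ x) (hP : ∀ x y, 0 ≤ P x y)
    (A : Finset Ω) : 0 ≤ conductance μ P A :=
  div_nonneg (edgeFlow_nonneg hμ hP A) (sum_nonneg fun x _ => hμ x)

theorem minConductance_nonneg [DecidableEq Ω] (hμ : ∀ x, 0 ≤ μ x) (hP : ∀ x y, 0 ≤ P x y) :
    0 ≤ minConductance μ P :=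
  Real.sInf_nonneg (by rintro _ ⟨A, -, -, rfl⟩; exact conductance_nonneg hμ hP A)

theorem minConductance_mul_sum_le_edgeFlow [DecidableEq Ω] (hμ : ∀ x, 0 < μ x)
    (hP : ∀ x y, 0 ≤ P x y) {A : Finset Ω} (hA : A.Nonempty) (hA2 : ∑ x ∈ A, μ x ≤ 1 / 2) :
    minConductance μ P * ∑ x ∈ A, μ x ≤ edgeFlow μ P A := by
  have hpos : 0 < ∑ x ∈ A, μ x := sum_pos (fun x _ => hμ x) hA
  have hle : minConductance μ P ≤ conductance μ P A :=
    csInf_le ⟨0, by rintro _ ⟨B, -, -, rfl⟩; exact conductance_nonneg (fun x => (hμ x).le) hP B⟩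
      ⟨A, hA, hA2, rfl⟩
  calc minConductance μ P * ∑ x ∈ A, μ x ≤ conductance μ P A * ∑ x ∈ A, μ x := by gcongr
    _ = edgeFlow μ P A := div_mul_cancel₀ _ hpos.ne'

theorem specGap_le_dirichletForm_div_varForm (hμ : ∀ x, 0 ≤ μ x) (hP : ∀ x y, 0 ≤ P x y)
    {f : Ω → ℝ} (hf : varForm μ f ≠ 0) : specGap μ P ≤ dirichletForm μ P f / varForm μ f :=
  csInf_le ⟨0, by
    rintro _ ⟨g, -, rfl⟩
    exact div_nonneg (dirichletForm_nonneg hμ hP g) (varForm_nonneg hμ g)⟩ ⟨f, hf, rfl⟩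

theorem specGap_le_two_mul_conductance [DecidableEq Ω] (hμ : ∀ x, 0 < μ x)
    (hP : ∀ x y, 0 ≤ P x y) (hμ1 : ∑ x, μ x = 1) (hrev : ∀ x y, μ x * P x y = μ y * P y x)
    {A : Finset Ω} (hA : A.Nonempty) (hA2 : ∑ x ∈ A, μ x ≤ 1 / 2) :
    specGap μ P ≤ 2 * conductance μ P A := by
  have hpos : 0 < ∑ x ∈ A, μ x := sum_pos (fun x _ => hμ x) hA
  have hvar : varForm μ (fun x => if x ∈ A then 1 else 0) ≠ 0 := by
    rw [varForm_indicator hμ1]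
    exact (mul_pos hpos (by linarith)).ne'
  have hQ := edgeFlow_nonneg (fun x => (hμ x).le) hP A
  calc specGap μ P ≤ edgeFlow μ P A / ((∑ x ∈ A, μ x) * (1 - ∑ x ∈ A, μ x)) := by
        simpa only [dirichletForm_indicator hrev, varForm_indicator hμ1] using
          specGap_le_dirichletForm_div_varForm (fun x => (hμ x).le) hP hvar
    _ = conductance μ P A / (1 - ∑ x ∈ A, μ x) := by rw [conductance, div_div]
    _ ≤ conductance μ P A / (1 / 2) :=
      div_le_div_of_nonneg_left (div_nonneg hQ hpos.le) (by norm_num) (by linarith)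
    _ = 2 * conductance μ P A := by ring

theorem exists_le_half [Nontrivial Ω] (hμ : ∀ x, 0 ≤ μ x) (hμ1 : ∑ x, μ x = 1) :
    ∃ x, μ x ≤ 1 / 2 := by
  obtain ⟨x, y, hxy⟩ := exists_pair_ne Ω
  classical
  have hsum : μ x + μ y ≤ 1 := by
    rw [← sum_pair hxy, ← hμ1]
    exact sum_le_univ_sum_of_nonneg hμ
  by_cases hx : μ x ≤ 1 / 2
  · exact ⟨x, hx⟩
  · exact ⟨y, by linarith⟩

theorem specGap_le_two_mul_minConductance [DecidableEq Ω] [Nontrivial Ω] (hμ : ∀ x, 0 < μ x)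
    (hP : ∀ x y, 0 ≤ P x y) (hμ1 : ∑ x, μ x = 1) (hrev : ∀ x y, μ x * P x y = μ y * P y x) :
    specGap μ P ≤ 2 * minConductance μ P := by
  obtain ⟨x, hx⟩ := exists_le_half (fun x => (hμ x).le) hμ1
  have : specGap μ P / 2 ≤ minConductance μ P := by
    refine le_csInf ⟨_, {x}, singleton_nonempty x, by simpa using hx, rfl⟩ ?_
    rintro _ ⟨A, hA, hA2, rfl⟩
    linarith [specGap_le_two_mul_conductance hμ hP hμ1 hrev hA hA2]
  linarith

theorem sq_minConductance_div_two_le_specGap [DecidableEq Ω] [Nontrivial Ω]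
    (hμ : ∀ x, 0 < μ x) (hP : ∀ x y, 0 ≤ P x y) (hP1 : ∀ x, ∑ y, P x y = 1)
    (hμ1 : ∑ x, μ x = 1) (hrev : ∀ x y, μ x * P x y = μ y * P y x) :
    minConductance μ P ^ 2 / 2 ≤ specGap μ P := by
  obtain ⟨x, hx⟩ := exists_le_half (fun x => (hμ x).le) hμ1
  have hvar : varForm μ (fun y => if y ∈ ({x} : Finset Ω) then 1 else 0) ≠ 0 := by
    rw [varForm_indicator hμ1, sum_singleton]
    exact (mul_pos (hμ x) (by linarith)).ne'
  refine le_csInf ⟨_, _, hvar, rfl⟩ ?_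
  rintro _ ⟨f, hf, rfl⟩
  rw [le_div_iff₀ ((varForm_nonneg (fun x => (hμ x).le) f).lt_of_ne' hf)]
  exact sq_mul_varForm_le_dirichletForm (fun x => (hμ x).le) hP hP1 hμ1 hrev
    (minConductance_nonneg (fun x => (hμ x).le) hP)
    (fun A hA hA2 => minConductance_mul_sum_le_edgeFlow hμ hP hA hA2) f

theorem minConductance_eq_zero_of_subsingleton [DecidableEq Ω] [Subsingleton Ω]
    (hμ1 : ∑ x, μ x = 1) : minConductance μ P = 0 := by
  rw [minConductance]
  convert Real.sInf_empty
  refine Set.eq_empty_of_forall_notMem ?_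
  rintro _ ⟨A, ⟨x, hx⟩, hA, -⟩
  rw [eq_univ_of_forall (s := A) fun y => Subsingleton.elim x y ▸ hx, hμ1] at hA
  norm_num at hA

theorem specGap_eq_zero_of_subsingleton [Subsingleton Ω] (hμ1 : ∑ x, μ x = 1) :
    specGap μ P = 0 := by
  rw [specGap]
  convert Real.sInf_empty
  refine Set.eq_empty_of_forall_notMem ?_
  rintro _ ⟨f, hf, -⟩
  refine hf (sum_eq_zero fun x _ => ?_)
  have hconst : ∀ y, f y = f x := fun y => congrArg f (Subsingleton.elim y x)
  simp only [hconst, ← sum_mul, hμ1, one_mul, sub_self]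
  ring

end

theorem statement5_general {Ω : Type*} [Fintype Ω] [DecidableEq Ω]
    (μ : Ω → ℝ) (P : Matrix Ω Ω ℝ)
    (hP0 : ∀ x y, 0 ≤ P x y) (hP1 : ∀ x, ∑ y, P x y = 1)
    (hμ0 : ∀ x, 0 < μ x) (hμ1 : ∑ x, μ x = 1)
    (hrev : ∀ x y, μ x * P x y = μ y * P y x) :
    minConductance μ P ^ 2 / 2 ≤ specGap μ P ∧
      specGap μ P ≤ 2 * minConductance μ P := by
  rcases subsingleton_or_nontrivial Ω with hΩ | hΩ
  -- With a single state both infima are over the empty set, and `sInf ∅ = 0`.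
  · simp [minConductance_eq_zero_of_subsingleton hμ1, specGap_eq_zero_of_subsingleton hμ1]
  · exact ⟨sq_minConductance_div_two_le_specGap hμ0 hP0 hP1 hμ1 hrev,
      specGap_le_two_mul_minConductance hμ0 hP0 hμ1 hrev⟩

/-- **Cheeger bounds.** For an irreducible reversible chain,
`Φ_*²/2 ≤ gap(P) ≤ 2 Φ_*`. -/
theorem statement5 {Ω : Type*} [Fintype Ω] [DecidableEq Ω] [Nonempty Ω]
    (μ : Ω → ℝ) (P : Matrix Ω Ω ℝ)
    (hP0 : ∀ x y, 0 ≤ P x y) (hP1 : ∀ x, ∑ y, P x y = 1)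
    (hμ0 : ∀ x, 0 < μ x) (hμ1 : ∑ x, μ x = 1)
    (hrev : ∀ x y, μ x * P x y = μ y * P y x)
    (hirr : ∀ x y, ∃ k : ℕ, 0 < (P ^ k) x y) :
    minConductance μ P ^ 2 / 2 ≤ specGap μ P ∧
      specGap μ P ≤ 2 * minConductance μ P :=
  statement5_general μ P hP0 hP1 hμ0 hμ1 hrev
end

section
/- Let P_FK = (1/|E|) Σ_{e∈E} P_e be the single-edge heat-bath (Glauber) dynamics for the random-cluster model on a finite graph with edge set E, and for a subset L ⊆ E of edges let P_MHB = (1/|E|)( Σ_{e∈L} P_e + Σ_{e∈E\L} P_{E\L} ), where P_B denotes the heat-bath update of the full block B ⊆ E. Then for every function f, ⟨f, P_MHB f⟩_π ≤ ⟨f, P_FK f⟩_π, and consequently gap(P_FK) ≤ gap(P_MHB). -/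
/-! The heat-bath update `P_B` is the `π`-conditional expectation given the configuration off `B`,
so `⟨f, P_B f⟩_π = ‖P_B f‖²`. For `B ⊆ B'` the tower property `P_{B'} P_B = P_{B'}` and the
contractivity of conditional expectation give `‖P_{B'} f‖² = ‖P_{B'} P_B f‖² ≤ ‖P_B f‖²`. Taking
`B = {e}` and `B' = E \ L` for each `e ∈ E \ L` compares the two chains term by term; as both
Dirichlet forms are divided by the same variance, the variational formula for the gap follows. -/

open Finset

variable {V : Type*} [DecidableEq V]

/-- Number of connected components of `(V, ω)` (isolated vertices included). -/
noncomputable def rcComps (V : Type*) [DecidableEq V] (ω : Finset (Sym2 V)) : ℕ :=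
  Nat.card (Quotient (Relation.EqvGen.setoid (fun x y : V => s(x, y) ∈ ω)))

/-- Unnormalized random-cluster weight. -/
noncomputable def rcWeight (p q : ℝ) (E : Finset (Sym2 V)) (ω : Finset (Sym2 V)) : ℝ :=
  p ^ ω.card * (1 - p) ^ (E \ ω).card * q ^ rcComps V ω

/-- Configurations on the edge set `E`. -/
abbrev Config (E : Finset (Sym2 V)) := {S : Finset (Sym2 V) // S ∈ E.powerset}

/-- The normalized random-cluster probability of a configuration. -/
noncomputable def rcProb (p q : ℝ) (E : Finset (Sym2 V)) (ω : Config E) : ℝ :=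
  rcWeight p q E ω.1 / ∑ σ : Config E, rcWeight p q E σ.1

/-- Heat-bath update of the block of edges `B`: resample the configuration on
`B` from the random-cluster measure conditioned on the configuration off `B`. -/
noncomputable def heatBath (p q : ℝ) (E B : Finset (Sym2 V)) :
    Matrix (Config E) (Config E) ℝ := fun ω ω' =>
  if ω.1 \ B = ω'.1 \ B then
    rcWeight p q E ω'.1 /
      ∑ σ : Config E, if σ.1 \ B = ω.1 \ B then rcWeight p q E σ.1 else 0
  else 0

/-- The single-edge heat-bath (FK/Glauber) dynamics. -/
noncomputable def Pfk (p q : ℝ) (E : Finset (Sym2 V)) : Matrix (Config E) (Config E) ℝ :=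
  (E.card : ℝ)⁻¹ • ∑ e ∈ E, heatBath p q E {e}

/-- The modified heat-bath dynamics: single-edge updates on `L` and a full
block update of `E \ L` for each edge of `E \ L`. -/
noncomputable def Pmhb (p q : ℝ) (E L : Finset (Sym2 V)) :
    Matrix (Config E) (Config E) ℝ :=
  (E.card : ℝ)⁻¹ •
    (∑ e ∈ L, heatBath p q E {e} + ((E \ L).card : ℝ) • heatBath p q E (E \ L))

/-- Inner product on `L²(π)`. -/
noncomputable def innerP (p q : ℝ) (E : Finset (Sym2 V)) (f g : Config E → ℝ) : ℝ :=
  ∑ ω : Config E, rcProb p q E ω * f ω * g ω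

/-- Variance under `π`. -/
noncomputable def varP (p q : ℝ) (E : Finset (Sym2 V)) (f : Config E → ℝ) : ℝ :=
  ∑ ω : Config E, rcProb p q E ω * (f ω - ∑ σ : Config E, rcProb p q E σ * f σ) ^ 2

/-- Spectral gap of a reversible chain `P`, via the variational formula
`gap = inf ⟨f, (I-P) f⟩_π / Var_π(f)`. -/
noncomputable def gapP (p q : ℝ) (E : Finset (Sym2 V)) (P : Matrix (Config E) (Config E) ℝ) : ℝ :=
  sInf {r : ℝ | ∃ f : Config E → ℝ, varP p q E f ≠ 0 ∧
    r = innerP p q E f (fun ω => f ω - P.mulVec f ω) / varP p q E f}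

section CondAvg

variable {Ω β γ : Type*} [Fintype Ω] [DecidableEq β] [DecidableEq γ]
  (w : Ω → ℝ) (k : Ω → β)

noncomputable def fiberAvg (f : Ω → ℝ) (b : β) : ℝ :=
  (∑ σ with k σ = b, w σ * f σ) / ∑ σ with k σ = b, w σ

/-- The conditional expectation of `f` given `k` under the weights `w` (`0` on fibres of total
weight `0`). -/
noncomputable def condAvg (f : Ω → ℝ) (ω : Ω) : ℝ :=
  fiberAvg w k f (k ω)

variable {w}

lemma sum_fiber_mul_fiberAvg (hw : 0 ≤ w) (f : Ω → ℝ) (b : β) :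
    (∑ σ with k σ = b, w σ) * fiberAvg w k f b = ∑ σ with k σ = b, w σ * f σ := by
  by_cases hD : ∑ σ with k σ = b, w σ = 0
  · have hw0 := (sum_eq_zero_iff_of_nonneg fun σ _ => hw σ).1 hD
    rw [hD, zero_mul]
    exact (sum_eq_zero fun σ hσ => by rw [hw0 σ hσ, zero_mul]).symm
  · exact mul_div_cancel₀ _ hD

lemma sum_mul_condAvg_mul_comp (hw : 0 ≤ w) (f : Ω → ℝ) (g : β → ℝ) :
    ∑ ω, w ω * condAvg w k f ω * g (k ω) = ∑ ω, w ω * f ω * g (k ω) := by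
  have hk : ∀ ω ∈ (univ : Finset Ω), k ω ∈ univ.image k := fun ω _ =>
    mem_image_of_mem k (mem_univ ω)
  rw [← sum_fiberwise_of_maps_to hk, ← sum_fiberwise_of_maps_to hk]
  refine sum_congr rfl fun b _ => ?_
  calc ∑ ω with k ω = b, w ω * condAvg w k f ω * g (k ω)
      = (∑ ω with k ω = b, w ω) * fiberAvg w k f b * g b := by
        rw [sum_mul, sum_mul]
        exact sum_congr rfl fun ω hω => by rw [condAvg, (mem_filter.1 hω).2]
    _ = ∑ ω with k ω = b, w ω * f ω * g (k ω) := by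
        rw [sum_fiber_mul_fiberAvg k hw, sum_mul]
        exact sum_congr rfl fun ω hω => by rw [(mem_filter.1 hω).2]

lemma condAvg_condAvg_comp (hw : 0 ≤ w) (φ : β → γ) (f : Ω → ℝ) :
    condAvg w (φ ∘ k) (condAvg w k f) = condAvg w (φ ∘ k) f := by
  funext ω
  unfold condAvg fiberAvg
  congr 1
  have hfiber : ∀ h : Ω → ℝ, ∑ σ with (φ ∘ k) σ = (φ ∘ k) ω, w σ * h σ =
      ∑ σ, w σ * h σ * if φ (k σ) = φ (k ω) then 1 else 0 := fun h => by
    simp only [sum_filter, Function.comp_apply, mul_boole]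
  rw [hfiber, hfiber]
  exact sum_mul_condAvg_mul_comp k hw f fun b => if φ b = φ (k ω) then 1 else 0

lemma sq_condAvg_le (hw : 0 ≤ w) (f : Ω → ℝ) (ω : Ω) :
    condAvg w k f ω ^ 2 ≤ condAvg w k (fun σ => f σ ^ 2) ω := by
  unfold condAvg fiberAvg
  set D := ∑ σ with k σ = k ω, w σ
  have hD : 0 ≤ D := sum_nonneg fun σ _ => hw σ
  have hCS : (∑ σ with k σ = k ω, w σ * f σ) ^ 2 ≤ D * ∑ σ with k σ = k ω, w σ * f σ ^ 2 :=
    sum_sq_le_sum_mul_sum_of_sq_le_mul _ (fun σ _ => hw σ)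
      (fun σ _ => mul_nonneg (hw σ) (sq_nonneg _)) fun σ _ => le_of_eq (by ring)
  rcases hD.eq_or_lt with hD0 | hDpos
  · simp [← hD0]
  · rw [div_pow, div_le_div_iff₀ (by positivity) hDpos]
    nlinarith

lemma sum_mul_sq_condAvg_le (hw : 0 ≤ w) (f : Ω → ℝ) :
    ∑ ω, w ω * condAvg w k f ω ^ 2 ≤ ∑ ω, w ω * f ω ^ 2 :=
  calc ∑ ω, w ω * condAvg w k f ω ^ 2
      ≤ ∑ ω, w ω * condAvg w k (fun σ => f σ ^ 2) ω * 1 := by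
        simp_rw [mul_one]
        exact sum_le_sum fun ω _ => mul_le_mul_of_nonneg_left (sq_condAvg_le k hw f ω) (hw ω)
    _ = ∑ ω, w ω * f ω ^ 2 := by
        simpa using sum_mul_condAvg_mul_comp k hw (fun σ => f σ ^ 2) fun _ => 1

lemma sum_mul_mul_condAvg (hw : 0 ≤ w) (f : Ω → ℝ) :
    ∑ ω, w ω * f ω * condAvg w k f ω = ∑ ω, w ω * condAvg w k f ω ^ 2 :=
  (sum_mul_condAvg_mul_comp k hw f (fiberAvg w k f)).symm.trans <|
    sum_congr rfl fun ω _ => by rw [sq, ← mul_assoc]; rfl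

lemma sum_mul_mul_condAvg_comp_le (hw : 0 ≤ w) (φ : β → γ) (f : Ω → ℝ) :
    ∑ ω, w ω * f ω * condAvg w (φ ∘ k) f ω ≤ ∑ ω, w ω * f ω * condAvg w k f ω :=
  calc ∑ ω, w ω * f ω * condAvg w (φ ∘ k) f ω
      = ∑ ω, w ω * condAvg w (φ ∘ k) (condAvg w k f) ω ^ 2 := by
        rw [sum_mul_mul_condAvg _ hw, condAvg_condAvg_comp k hw]
    _ ≤ ∑ ω, w ω * condAvg w k f ω ^ 2 := sum_mul_sq_condAvg_le _ hw _
    _ = ∑ ω, w ω * f ω * condAvg w k f ω := (sum_mul_mul_condAvg k hw f).symm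

lemma sum_mul_mul_condAvg_le (hw : 0 ≤ w) (f : Ω → ℝ) :
    ∑ ω, w ω * f ω * condAvg w k f ω ≤ ∑ ω, w ω * f ω * f ω := by
  rw [sum_mul_mul_condAvg k hw]
  simpa only [sq, mul_assoc] using sum_mul_sq_condAvg_le k hw f

end CondAvg

section RandomCluster

variable {p q : ℝ} (E : Finset (Sym2 V))

lemma rcWeight_nonneg (hp : p ∈ Set.Icc (0 : ℝ) 1) (hq : 0 ≤ q) (ω : Finset (Sym2 V)) :
    0 ≤ rcWeight p q E ω := by
  have := hp.1
  have := sub_nonneg.2 hp.2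
  unfold rcWeight
  positivity

lemma rcProb_nonneg (hp : p ∈ Set.Icc (0 : ℝ) 1) (hq : 0 ≤ q) (ω : Config E) :
    0 ≤ rcProb p q E ω :=
  div_nonneg (rcWeight_nonneg E hp hq _) (sum_nonneg fun _ _ => rcWeight_nonneg E hp hq _)

lemma heatBath_mulVec (B : Finset (Sym2 V)) (f : Config E → ℝ) :
    (heatBath p q E B).mulVec f =
      condAvg (fun ω : Config E => rcWeight p q E ω.1) (fun ω => ω.1 \ B) f := by
  funext ω
  simp only [Matrix.mulVec, dotProduct, heatBath, condAvg, fiberAvg, sum_filter, ite_mul,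
    zero_mul, sum_div, ite_div, zero_div, eq_comm (a := ω.1 \ B), div_mul_eq_mul_div]

lemma innerP_eq_dotProduct (f g : Config E → ℝ) :
    innerP p q E f g = (fun ω => rcProb p q E ω * f ω) ⬝ᵥ g :=
  rfl

lemma innerP_eq_div (f g : Config E → ℝ) :
    innerP p q E f g =
      (∑ ω : Config E, rcWeight p q E ω.1 * f ω * g ω) / ∑ σ : Config E, rcWeight p q E σ.1 := by
  simp only [innerP, rcProb, sum_div]
  exact sum_congr rfl fun ω _ => by ring

lemma innerP_sub_right (f g h : Config E → ℝ) :
    innerP p q E f (fun ω => g ω - h ω) = innerP p q E f g - innerP p q E f h := by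
  simp only [innerP, mul_sub, sum_sub_distrib]

lemma innerP_self_nonneg (hp : p ∈ Set.Icc (0 : ℝ) 1) (hq : 0 ≤ q) (f : Config E → ℝ) :
    0 ≤ innerP p q E f f :=
  sum_nonneg fun ω _ => by
    rw [mul_assoc]
    exact mul_nonneg (rcProb_nonneg E hp hq ω) (mul_self_nonneg _)

lemma varP_nonneg (hp : p ∈ Set.Icc (0 : ℝ) 1) (hq : 0 ≤ q) (f : Config E → ℝ) :
    0 ≤ varP p q E f :=
  sum_nonneg fun ω _ => mul_nonneg (rcProb_nonneg E hp hq ω) (sq_nonneg _)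

lemma innerP_Pfk_mulVec (f : Config E → ℝ) :
    innerP p q E f ((Pfk p q E).mulVec f) =
      (E.card : ℝ)⁻¹ * ∑ e ∈ E, innerP p q E f ((heatBath p q E {e}).mulVec f) := by
  simp only [innerP_eq_dotProduct, Pfk, Matrix.smul_mulVec, Matrix.sum_mulVec, dotProduct_smul,
    dotProduct_sum, smul_eq_mul]

lemma innerP_Pmhb_mulVec (L : Finset (Sym2 V)) (f : Config E → ℝ) :
    innerP p q E f ((Pmhb p q E L).mulVec f) =
      (E.card : ℝ)⁻¹ * (∑ e ∈ L, innerP p q E f ((heatBath p q E {e}).mulVec f) +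
        ((E \ L).card : ℝ) * innerP p q E f ((heatBath p q E (E \ L)).mulVec f)) := by
  simp only [innerP_eq_dotProduct, Pmhb, Matrix.smul_mulVec, Matrix.add_mulVec,
    Matrix.sum_mulVec, dotProduct_smul, dotProduct_add, dotProduct_sum, smul_eq_mul]

variable (hp : p ∈ Set.Icc (0 : ℝ) 1) (hq : 0 ≤ q)
include hp hq

lemma innerP_heatBath_le_of_subset {B B' : Finset (Sym2 V)} (h : B ⊆ B') (f : Config E → ℝ) :
    innerP p q E f ((heatBath p q E B').mulVec f) ≤
      innerP p q E f ((heatBath p q E B).mulVec f) := by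
  have hk : (fun ω : Config E => ω.1 \ B') = (· \ B') ∘ fun ω : Config E => ω.1 \ B :=
    funext fun ω => by simp [sdiff_sdiff_left, union_eq_right.2 h]
  rw [innerP_eq_div, innerP_eq_div, heatBath_mulVec, heatBath_mulVec, hk]
  exact div_le_div_of_nonneg_right
    (sum_mul_mul_condAvg_comp_le _ (fun ω => rcWeight_nonneg E hp hq _) _ f)
    (sum_nonneg fun _ _ => rcWeight_nonneg E hp hq _)

lemma innerP_heatBath_le_self (B : Finset (Sym2 V)) (f : Config E → ℝ) :
    innerP p q E f ((heatBath p q E B).mulVec f) ≤ innerP p q E f f := by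
  rw [innerP_eq_div, innerP_eq_div, heatBath_mulVec]
  exact div_le_div_of_nonneg_right
    (sum_mul_mul_condAvg_le _ (fun ω => rcWeight_nonneg E hp hq _) f)
    (sum_nonneg fun _ _ => rcWeight_nonneg E hp hq _)

lemma innerP_Pmhb_le_innerP_Pfk {L : Finset (Sym2 V)} (hL : L ⊆ E) (f : Config E → ℝ) :
    innerP p q E f ((Pmhb p q E L).mulVec f) ≤ innerP p q E f ((Pfk p q E).mulVec f) := by
  rw [innerP_Pmhb_mulVec, innerP_Pfk_mulVec, ← sum_sdiff hL, add_comm (∑ e ∈ E \ L, _)]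
  refine mul_le_mul_of_nonneg_left (add_le_add le_rfl ?_) (by positivity)
  rw [← nsmul_eq_mul, ← sum_const]
  exact sum_le_sum fun e he =>
    innerP_heatBath_le_of_subset E hp hq (singleton_subset_iff.2 he) f

lemma innerP_Pfk_le_self (f : Config E → ℝ) :
    innerP p q E f ((Pfk p q E).mulVec f) ≤ innerP p q E f f := by
  rw [innerP_Pfk_mulVec]
  calc (E.card : ℝ)⁻¹ * ∑ e ∈ E, innerP p q E f ((heatBath p q E {e}).mulVec f)
      ≤ (E.card : ℝ)⁻¹ * (E.card * innerP p q E f f) := by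
        rw [← nsmul_eq_mul]
        exact mul_le_mul_of_nonneg_left
          (sum_le_card_nsmul _ _ _ fun e _ => innerP_heatBath_le_self E hp hq {e} f)
          (by positivity)
    _ = ((E.card : ℝ)⁻¹ * E.card) * innerP p q E f f := (mul_assoc _ _ _).symm
    _ ≤ innerP p q E f f :=
        mul_le_of_le_one_left (innerP_self_nonneg E hp hq f)
          (inv_mul_le_one_of_le₀ le_rfl (Nat.cast_nonneg _))

lemma gapP_le_gapP {P P' : Matrix (Config E) (Config E) ℝ}
    (hP : ∀ f, innerP p q E f (P.mulVec f) ≤ innerP p q E f f)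
    (hPP' : ∀ f, innerP p q E f (P'.mulVec f) ≤ innerP p q E f (P.mulVec f)) :
    gapP p q E P ≤ gapP p q E P' := by
  unfold gapP
  by_cases hvar : ∃ f : Config E → ℝ, varP p q E f ≠ 0
  · obtain ⟨f₀, hf₀⟩ := hvar
    have hbdd : BddBelow {r : ℝ | ∃ f : Config E → ℝ, varP p q E f ≠ 0 ∧
        r = innerP p q E f (fun ω => f ω - P.mulVec f ω) / varP p q E f} := by
      refine ⟨0, ?_⟩
      rintro _ ⟨f, -, rfl⟩
      rw [innerP_sub_right]
      exact div_nonneg (sub_nonneg.2 (hP f)) (varP_nonneg E hp hq f)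
    refine le_csInf ⟨_, f₀, hf₀, rfl⟩ ?_
    rintro _ ⟨f, hf, rfl⟩
    refine (csInf_le hbdd ⟨f, hf, rfl⟩).trans ?_
    rw [innerP_sub_right, innerP_sub_right]
    exact div_le_div_of_nonneg_right (sub_le_sub_left (hPP' f) _) (varP_nonneg E hp hq f)
  · simp only [not_exists, not_not] at hvar
    simp [hvar]

end RandomCluster

theorem statement10_general {V : Type*} [DecidableEq V]
    (p q : ℝ) (hp : p ∈ Set.Ioo (0 : ℝ) 1) (hq : 0 < q)
    (E L : Finset (Sym2 V)) (hL : L ⊆ E) :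
    (∀ f : Config E → ℝ,
        innerP p q E f ((Pmhb p q E L).mulVec f) ≤ innerP p q E f ((Pfk p q E).mulVec f)) ∧
      gapP p q E (Pfk p q E) ≤ gapP p q E (Pmhb p q E L) := by
  have hp' : p ∈ Set.Icc (0 : ℝ) 1 := Set.Ioo_subset_Icc_self hp
  exact ⟨innerP_Pmhb_le_innerP_Pfk E hp' hq.le hL,
    gapP_le_gapP E hp' hq.le (innerP_Pfk_le_self E hp' hq.le)
      (innerP_Pmhb_le_innerP_Pfk E hp' hq.le hL)⟩

/-- `⟨f, P_MHB f⟩_π ≤ ⟨f, P_FK f⟩_π` for all `f`, and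
consequently `gap(P_FK) ≤ gap(P_MHB)`. -/
theorem statement10 {V : Type*} [DecidableEq V]
    (p q : ℝ) (hp : p ∈ Set.Ioo (0 : ℝ) 1) (hq : 0 < q)
    (E L : Finset (Sym2 V)) (hL : L ⊆ E) (hE : E.Nonempty) :
    (∀ f : Config E → ℝ,
        innerP p q E f ((Pmhb p q E L).mulVec f) ≤ innerP p q E f ((Pfk p q E).mulVec f)) ∧
      gapP p q E (Pfk p q E) ≤ gapP p q E (Pmhb p q E L) :=
  statement10_general p q hp hq E L hL
end
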